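/- arXiv:2002.11230 — 2 statements merged into one kernel-verified Lean document; each statement's English description precedes it below -/
import Mathlib

section
/- Let Γ be a group, K a Γ-graded division ring with support Γ_K, γ₁,…,γₙ ∈ Γ, and R = Mₙ(K)(γ₁,…,γₙ). Then R is strongly graded if and only if the set of left cosets {γ₁Γ_K, …, γₙΓ_K} equals Γ/Γ_K, i.e., every left coset of Γ_K in Γ is of the form γᵢΓ_K for some i ∈ {1,…,n}. -/
open Pointwise

structure RingGrading (Γ : Type) [Group Γ] (R : Type) [Ring R] where
  component : Γ → AddSubgroup R
  one_mem : (1 : R) ∈ component 1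
  mul_mem : ∀ {γ δ : Γ} {a b : R}, a ∈ component γ → b ∈ component δ →
    a * b ∈ component (γ * δ)
  iSup_eq_top : (⨆ γ : Γ, component γ) = ⊤
  independent : iSupIndep component

variable {Γ : Type} [Group Γ] {R : Type} [Ring R]

def matrixComponent (g : RingGrading Γ R) (n : ℕ) (γv : Fin n → Γ) (δ : Γ) :
    AddSubgroup (Matrix (Fin n) (Fin n) R) where
  carrier := {M | ∀ i j, M i j ∈ g.component ((γv i)⁻¹ * δ * γv j)}
  add_mem' := by
    intro a b ha hb i j
    simpa [Matrix.add_apply] using add_mem (ha i j) (hb i j)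
  zero_mem' := by
    intro i j
    simpa using zero_mem (g.component ((γv i)⁻¹ * δ * γv j))
  neg_mem' := by
    intro a ha i j
    simpa [Matrix.neg_apply] using neg_mem (ha i j)

/-- A `Γ`-graded ring (given by its components) is strongly graded if
`R_γ R_δ = R_{γδ}` for all `γ, δ`; since the inclusion `R_γ R_δ ⊆ R_{γδ}` always
holds in a graded ring, this is the nontrivial inclusion. -/
def StronglyGraded {S : Type} [Ring S] (c : Γ → AddSubgroup S) : Prop :=
  ∀ γ δ : Γ, c (γ * δ) ≤ AddSubgroup.closure ((c γ : Set S) * (c δ : Set S))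

/-- A unital graded ring is a crossed product if every component contains an invertible
element. -/
def IsCrossedProduct {S : Type} [Ring S] (c : Γ → AddSubgroup S) : Prop :=
  ∀ γ : Γ, ∃ u : Sˣ, (u : S) ∈ c γ

/-- Graded unit-regular: every `a ∈ R_γ` satisfies `a = a u a` for some unit `u ∈ R_{γ⁻¹}`. -/
def GradedUnitRegular {S : Type} [Ring S] (c : Γ → AddSubgroup S) : Prop :=
  ∀ (γ : Γ) (a : S), a ∈ c γ → ∃ u : Sˣ, (u : S) ∈ c γ⁻¹ ∧ a = a * u * a

/-- A `Γ`-graded division ring: a graded ring in which every nonzero homogeneous element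
is invertible. -/
structure GradedDivRing (Γ : Type) [Group Γ] (K : Type) [Ring K] extends
    RingGrading Γ K where
  isUnit_of_homogeneous : ∀ {γ : Γ} {a : K}, a ∈ component γ → a ≠ 0 → IsUnit a

/-- The support `Γ_R = {γ | R_γ ≠ 0}` of a grading. -/
def RingGrading.support (g : RingGrading Γ R) : Set Γ := {γ : Γ | g.component γ ≠ ⊥}

def IsGradedIso {Γ R S : Type} [AddGroup R] [Mul R] [AddGroup S] [Mul S]
    (cR : Γ → AddSubgroup R) (cS : Γ → AddSubgroup S) : Prop :=
  ∃ e : R ≃+* S, ∀ (γ : Γ) (x : R), x ∈ cR γ ↔ e x ∈ cS γ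

/-- The identity component `R_ε` of the graded matrix ring, as a subring. -/
def matrixIdentitySubring (g : RingGrading Γ R) (n : ℕ) (γv : Fin n → Γ) :
    Subring (Matrix (Fin n) (Fin n) R) where
  carrier := matrixComponent g n γv 1
  add_mem' := add_mem
  zero_mem' := zero_mem _
  neg_mem' := neg_mem
  one_mem' := by
    intro i j
    by_cases h : i = j
    · subst h
      rw [Matrix.one_apply_eq]
      have hh : (γv i)⁻¹ * 1 * γv i = 1 := by group
      rw [hh]; exact g.one_mem
    · rw [Matrix.one_apply_ne h]
      exact zero_mem _
  mul_mem' := by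
    intro a b ha hb i j
    show (a * b) i j ∈ _
    rw [Matrix.mul_apply]
    refine AddSubgroup.sum_mem _ fun k _ => ?_
    have h := g.mul_mem (ha i k) (hb k j)
    have hh : (γv i)⁻¹ * 1 * γv k * ((γv k)⁻¹ * 1 * γv j) = (γv i)⁻¹ * 1 * γv j := by group
    rwa [hh] at h

/-- The degree-`γ` component `A·γ` of the group ring `A[Γ]`. -/
def monoidAlgebraComponent (A : Type) [Ring A] (Γ : Type) [Group Γ] (γ : Γ) :
    AddSubgroup (MonoidAlgebra A Γ) where
  carrier := {f | ∀ δ : Γ, δ ≠ γ → f.coeff δ = 0}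
  add_mem' := by
    intro f h hf hh δ hδ
    show (f.coeff + h.coeff) δ = 0
    rw [Finsupp.add_apply, hf δ hδ, hh δ hδ, add_zero]
  zero_mem' := fun δ _ => rfl
  neg_mem' := by
    intro f hf δ hδ
    show (-f.coeff) δ = 0
    rw [Finsupp.neg_apply, hf δ hδ, neg_zero]

/-!
If every coset of `Γ_K` is some `γₖΓ_K`, a matrix unit `eᵢⱼ x` of degree `γδ` factors as
`(eᵢₖ (x b⁻¹)) (eₖⱼ b)` with `b` a nonzero, hence invertible, homogeneous element of degree
`γₖ⁻¹δγⱼ`; its inverse is again homogeneous, so both factors are homogeneous of degrees `γ` and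
`δ`. Conversely, put `σ = γᵢ₀δ⁻¹` and write the identity matrix, of degree `σσ⁻¹`, as a sum of
products `AB` with `A ∈ R_σ`, `B ∈ R_{σ⁻¹}`: its `(i₀, i₀)` entry forces some `B_{k i₀} ≠ 0`,
and `B_{k i₀}` has degree `γₖ⁻¹δ`.
-/

theorem AddSubgroup.exists_apply_ne_zero_of_mem_closure {G H : Type*} [AddGroup G] [AddGroup H]
    (φ : G →+ H) {s : Set G} {x : G} (hx : x ∈ AddSubgroup.closure s) (hφx : φ x ≠ 0) :
    ∃ y ∈ s, φ y ≠ 0 := by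
  by_contra! h
  exact hφx <| (AddSubgroup.closure_le φ.ker).mpr h hx

namespace RingGrading

variable {Γ : Type} [Group Γ] {K : Type} [Ring K] (g : RingGrading Γ K)

/-- Mathlib's graded rings are indexed by additive monoids. -/
def additiveComponent (γ : Additive Γ) : AddSubgroup K := g.component γ.toMul

instance : SetLike.GradedMonoid g.additiveComponent where
  one_mem := g.one_mem
  mul_mem _ _ _ _ := g.mul_mem

theorem isInternal_additiveComponent [DecidableEq Γ] :
    DirectSum.IsInternal g.additiveComponent :=
  DirectSum.isInternal_submodule_of_iSupIndep_of_iSup_eq_top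
    (A := fun γ => (g.additiveComponent γ).toIntSubmodule)
    ((iSupIndep_map_orderIso_iff AddSubgroup.toIntSubmodule).mpr g.independent)
    (by
      rw [← AddSubgroup.toIntSubmodule.map_iSup]
      exact (map_eq_top_iff AddSubgroup.toIntSubmodule).mpr g.iSup_eq_top)

noncomputable instance [DecidableEq Γ] : GradedRing g.additiveComponent :=
  { g.isInternal_additiveComponent.chooseDecomposition with }

open DirectSum in
theorem inv_mem_component {σ : Γ} {u : Kˣ} (hu : (u : K) ∈ g.component σ) :
    ((u⁻¹ : Kˣ) : K) ∈ g.component σ⁻¹ := by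
  classical
  -- the degree-`σ⁻¹` component of `u⁻¹` is already a right inverse of `u`
  set b := decompose g.additiveComponent (↑u⁻¹ : K) (Additive.ofMul σ⁻¹)
  have hub : (u : K) * b = 1 := by
    rw [← coe_decompose_mul_add_of_left_mem (i := Additive.ofMul σ) g.additiveComponent hu,
      u.mul_inv, ← ofMul_mul, mul_inv_cancel, ofMul_one]
    exact decompose_of_mem_same _ g.one_mem
  rw [Units.inv_eq_of_mul_eq_one_right hub]
  exact b.2

theorem mem_support_iff {σ : Γ} : σ ∈ g.support ↔ ∃ a ∈ g.component σ, a ≠ 0 :=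
  AddSubgroup.ne_bot_iff_exists_ne_zero.trans (by simp)

end RingGrading

namespace GradedDivRing

variable {Γ : Type} [Group Γ] {K : Type} [Ring K] (g : GradedDivRing Γ K)

theorem exists_mul_eq_of_mem_support {ρ τ : Γ} (hτ : τ ∈ g.toRingGrading.support) {x : K}
    (hx : x ∈ g.component ρ) : ∃ a ∈ g.component (ρ * τ⁻¹), ∃ b ∈ g.component τ, a * b = x := by
  obtain ⟨b, hb, hb0⟩ := (g.toRingGrading.mem_support_iff).mp hτ
  obtain ⟨u, rfl⟩ := g.isUnit_of_homogeneous hb hb0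
  exact ⟨x * ↑u⁻¹, g.mul_mem hx (g.toRingGrading.inv_mem_component hb), u, hb, by simp⟩

end GradedDivRing

section MatrixGrading

variable {Γ : Type} [Group Γ] {K : Type} [Ring K] {n : ℕ} (γv : Fin n → Γ)

theorem single_mem_matrixComponent (g : RingGrading Γ K) {δ : Γ} {i j : Fin n} {a : K}
    (ha : a ∈ g.component ((γv i)⁻¹ * δ * γv j)) :
    Matrix.single i j a ∈ matrixComponent g n γv δ := by
  intro i' j'
  by_cases h : i = i' ∧ j = j'
  · obtain ⟨rfl, rfl⟩ := h
    rwa [Matrix.single_apply_same]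
  · rw [Matrix.single_apply_of_ne (h := h)]
    exact zero_mem _

theorem exists_inv_mul_mem_support_of_stronglyGraded [Nontrivial K] (g : RingGrading Γ K)
    (h : StronglyGraded (matrixComponent g n γv)) (i₀ : Fin n) (δ : Γ) :
    ∃ k : Fin n, (γv k)⁻¹ * δ ∈ g.support := by
  set σ := γv i₀ * δ⁻¹
  have hone : (1 : Matrix (Fin n) (Fin n) K) ∈ matrixComponent g n γv (σ * σ⁻¹) := by
    rw [mul_inv_cancel]
    exact (matrixIdentitySubring g n γv).one_mem
  obtain ⟨_, ⟨A, hA, B, hB, rfl⟩, hAB⟩ :=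
    AddSubgroup.exists_apply_ne_zero_of_mem_closure (Matrix.entryAddMonoidHom K i₀ i₀)
      (h σ σ⁻¹ hone) (by simp)
  replace hAB : ∑ k, A i₀ k * B k i₀ ≠ 0 := hAB
  obtain ⟨k, -, hk⟩ := Finset.exists_ne_zero_of_sum_ne_zero hAB
  have hBk : B k i₀ ∈ g.component ((γv k)⁻¹ * δ) := by
    convert hB k i₀ using 2
    simp only [σ]
    group
  exact ⟨k, g.mem_support_iff.mpr ⟨B k i₀, hBk, right_ne_zero_of_mul hk⟩⟩

theorem GradedDivRing.stronglyGraded_matrixComponent (g : GradedDivRing Γ K)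
    (hcover : ∀ δ : Γ, ∃ k : Fin n, (γv k)⁻¹ * δ ∈ g.toRingGrading.support) :
    StronglyGraded (matrixComponent g.toRingGrading n γv) := by
  intro γ δ M hM
  rw [Matrix.matrix_eq_sum_single M]
  refine AddSubgroup.sum_mem _ fun i _ => AddSubgroup.sum_mem _ fun j _ => ?_
  obtain ⟨k, hk⟩ := hcover (δ * γv j)
  rw [← mul_assoc] at hk
  obtain ⟨a, ha, b, hb, hab⟩ := g.exists_mul_eq_of_mem_support hk (hM i j)
  have ha' : a ∈ g.component ((γv i)⁻¹ * γ * γv k) := by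
    convert ha using 2
    group
  rw [← hab, ← Matrix.single_mul_single_same (c := a) i k j b]
  exact AddSubgroup.subset_closure <| Set.mul_mem_mul
    (single_mem_matrixComponent γv _ ha') (single_mem_matrixComponent γv _ hb)

end MatrixGrading

/-- For a `Γ`-graded division ring `K` with support `Γ_K` and
`R = Mₙ(K)(γ₁, …, γₙ)`, the ring `R` is strongly graded iff every left coset of `Γ_K`
equals `γᵢΓ_K` for some `i` (note `δΓ_K = γᵢΓ_K ↔ γᵢ⁻¹δ ∈ Γ_K`). -/
theorem matrix_stronglyGraded_iff_cosets {Γ : Type} [Group Γ] {K : Type} [Ring K]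
    [Nontrivial K] (g : GradedDivRing Γ K) {n : ℕ} (hn : 0 < n) (γv : Fin n → Γ) :
    StronglyGraded (matrixComponent g.toRingGrading n γv) ↔
      ∀ δ : Γ, ∃ i : Fin n, (γv i)⁻¹ * δ ∈ g.toRingGrading.support :=
  ⟨fun h => exists_inv_mul_mem_support_of_stronglyGraded γv g.toRingGrading h ⟨0, hn⟩,
    g.stronglyGraded_matrixComponent γv⟩
end

section
/- Let K be a field, m and n positive integers, and γ₁,…,γₙ integers. For each j ∈ {0,…,m−1} let k_j be the number of indices i with γᵢ ≡ j (mod m). Then the ℤ-graded ring R = Mₙ(K[x^m, x^{−m}])(γ₁,…,γₙ) is a crossed product if and only if k₀, k₁, …, k_{m−1} are all positive and equal to each other; and in that case R is a skew group ring. -/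
/-!
A unit of degree `d` in `Mₙ(K[x^m, x^{-m}])(γ₁, …, γₙ)` can only have a nonzero entry at
`(i, j)` when `γⱼ ≡ γᵢ - d (mod m)`. Since `K[x^m, x^{-m}]` is commutative, invertible matrices
over it satisfy the rank condition, so the residue class `r` occurs among the `γᵢ` at most as
often as `r - d`; letting `d` vary, all residue classes occur equally often.

Conversely, if they do, some permutation `π` satisfies `γ_{π i} ≡ γᵢ - 1 (mod m)`, and the monomial
matrix with the unit `x^{1 - γᵢ + γ_{π i}}` in position `(i, π i)` has degree `1` and an inverse of
degree `-1`. Its integer powers make the ring a skew group ring.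
-/

open Pointwise

noncomputable section

def matrixComponentZ {R : Type} [Ring R] (c : ℤ → AddSubgroup R) (n : ℕ)
    (γv : Fin n → ℤ) (δ : ℤ) : AddSubgroup (Matrix (Fin n) (Fin n) R) where
  carrier := {M | ∀ i j, M i j ∈ c (-(γv i) + δ + γv j)}
  add_mem' := by
    intro a b ha hb i j
    simpa [Matrix.add_apply] using add_mem (ha i j) (hb i j)
  zero_mem' := by
    intro i j
    simpa using zero_mem (c (-(γv i) + δ + γv j))
  neg_mem' := by
    intro a ha i j
    simpa [Matrix.neg_apply] using neg_mem (ha i j)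

/-- The graded field `K[x^m, x^{-m}]`, realized as the Laurent polynomial ring
`AddMonoidAlgebra K ℤ` in which the basis element `single k` stands for `x^{m k}`.
Its degree-`d` component is `K·x^d` if `m ∣ d` (i.e. `d = m k`) and `0` otherwise. -/
def laurentComponent (K : Type) [Field K] (m : ℕ) (d : ℤ) :
    AddSubgroup (AddMonoidAlgebra K ℤ) where
  carrier := {f | ∀ k : ℤ, (m : ℤ) * k ≠ d → f.coeff k = 0}
  add_mem' := by
    intro f h hf hh k hk
    show (f + h).coeff k = 0
    rw [AddMonoidAlgebra.coeff_add, Finsupp.add_apply, hf k hk, hh k hk, add_zero]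
  zero_mem' := fun k _ => rfl
  neg_mem' := by
    intro f hf k hk
    show (-f).coeff k = 0
    rw [AddMonoidAlgebra.coeff_neg, Finsupp.neg_apply, hf k hk, neg_zero]

theorem laurentComponent_mul {K : Type} [Field K] {m : ℕ} {a b : ℤ}
    {f g : AddMonoidAlgebra K ℤ} (hf : f ∈ laurentComponent K m a)
    (hg : g ∈ laurentComponent K m b) : f * g ∈ laurentComponent K m (a + b) := by
  intro k hk
  by_contra hne
  have hks : k ∈ (f * g).coeff.support := Finsupp.mem_support_iff.mpr hne
  have hmem := AddMonoidAlgebra.support_coeff_mul_subset f g hks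
  rw [Finset.mem_add] at hmem
  obtain ⟨k₁, hk₁, k₂, hk₂, hsum⟩ := hmem
  have h1 : (m : ℤ) * k₁ = a := by
    by_contra h
    exact (Finsupp.mem_support_iff.mp hk₁) (hf k₁ h)
  have h2 : (m : ℤ) * k₂ = b := by
    by_contra h
    exact (Finsupp.mem_support_iff.mp hk₂) (hg k₂ h)
  exact hk (by rw [← hsum, mul_add, h1, h2])

def StronglyGradedZ {S : Type} [Ring S] (c : ℤ → AddSubgroup S) : Prop :=
  ∀ a b : ℤ, c (a + b) ≤ AddSubgroup.closure ((c a : Set S) * (c b : Set S))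

def IsCrossedProductZ {S : Type} [Ring S] (c : ℤ → AddSubgroup S) : Prop :=
  ∀ d : ℤ, ∃ u : Sˣ, (u : S) ∈ c d

def IsSkewGroupRingZ {S : Type} [Ring S] (c : ℤ → AddSubgroup S) : Prop :=
  ∃ σ : ℤ → Sˣ, (∀ a b : ℤ, σ (a + b) = σ a * σ b) ∧ ∀ d : ℤ, ((σ d : Sˣ) : S) ∈ c d

/-- The degree-zero component of `Mₙ(K[x^m, x^{-m}])(γ₁, …, γₙ)`, as a subring. -/
def laurentMatrixZeroSubring (K : Type) [Field K] (m n : ℕ) (γv : Fin n → ℤ) :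
    Subring (Matrix (Fin n) (Fin n) (AddMonoidAlgebra K ℤ)) where
  carrier := matrixComponentZ (laurentComponent K m) n γv 0
  add_mem' := add_mem
  zero_mem' := zero_mem _
  neg_mem' := neg_mem
  one_mem' := by
    intro i j
    by_cases h : i = j
    · subst h
      rw [Matrix.one_apply_eq]
      have hh : -(γv i) + 0 + γv i = 0 := by ring
      rw [hh]
      intro k hk
      have hk0 : k ≠ 0 := by
        intro h0; exact hk (by rw [h0, mul_zero])
      show ((AddMonoidAlgebra.single (0 : ℤ) (1 : K))).coeff k = 0
      exact Finsupp.single_eq_of_ne' (Ne.symm hk0)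
    · rw [Matrix.one_apply_ne h]
      exact zero_mem _
  mul_mem' := by
    intro a b ha hb i j
    show (a * b) i j ∈ _
    rw [Matrix.mul_apply]
    refine AddSubgroup.sum_mem _ fun k _ => ?_
    have h := laurentComponent_mul (ha i k) (hb k j)
    have hh : -(γv i) + 0 + γv k + (-(γv k) + 0 + γv j) = -(γv i) + 0 + γv j := by ring
    rwa [hh] at h

/-- The degree-`d` component `A·d` of the group ring `A[ℤ]`. -/
def addMonoidAlgebraComponentZ (A : Type) [Ring A] (d : ℤ) :
    AddSubgroup (AddMonoidAlgebra A ℤ) where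
  carrier := {f | ∀ k : ℤ, k ≠ d → f.coeff k = 0}
  add_mem' := by
    intro f h hf hh k hk
    show (f + h).coeff k = 0
    rw [AddMonoidAlgebra.coeff_add, Finsupp.add_apply, hf k hk, hh k hk, add_zero]
  zero_mem' := fun k _ => rfl
  neg_mem' := by
    intro f hf k hk
    show (-f).coeff k = 0
    rw [AddMonoidAlgebra.coeff_neg, Finsupp.neg_apply, hf k hk, neg_zero]

theorem Matrix.card_le_card_of_mul_eq_one {R : Type*} [Semiring R] [RankCondition R]
    {ι κ : Type*} [Fintype ι] [Fintype κ] [DecidableEq ι] {A : Matrix ι κ R} {B : Matrix κ ι R}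
    (h : A * B = 1) : Fintype.card ι ≤ Fintype.card κ :=
  card_le_of_surjective R B.vecMulLinear fun w =>
    ⟨Matrix.vecMul w A, by
      rw [Matrix.vecMulLinear_apply, Matrix.vecMul_vecMul, h, Matrix.vecMul_one]⟩

theorem Matrix.ncard_le_ncard_of_isUnit {R : Type*} [Semiring R] [RankCondition R]
    {ι : Type*} [Fintype ι] [DecidableEq ι] {U : Matrix ι ι R} (hU : IsUnit U) {S T : Set ι}
    (hST : ∀ i ∈ S, ∀ j ∉ T, U i j = 0) : S.ncard ≤ T.ncard := by
  classical
  obtain ⟨u, rfl⟩ := hU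
  rw [← Nat.card_coe_set_eq, ← Nat.card_coe_set_eq, Nat.card_eq_fintype_card,
    Nat.card_eq_fintype_card]
  refine Matrix.card_le_card_of_mul_eq_one
    (A := (u : Matrix ι ι R).submatrix (Subtype.val : S → ι) (Subtype.val : T → ι))
    (B := (↑u⁻¹ : Matrix ι ι R).submatrix (Subtype.val : T → ι) (Subtype.val : S → ι)) ?_
  ext i i'
  have hsum := Fintype.sum_subtype_add_sum_subtype (· ∈ T)
    fun j => (u : Matrix ι ι R) i j * (↑u⁻¹ : Matrix ι ι R) j i'
  have hzero : ∑ j : {j // j ∉ T}, (u : Matrix ι ι R) i j * (↑u⁻¹ : Matrix ι ι R) j i' = 0 :=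
    Finset.sum_eq_zero fun j _ => by rw [hST i i.2 j j.2, zero_mul]
  rw [hzero, add_zero] at hsum
  rw [Matrix.mul_apply, Matrix.one_apply]
  simp only [Matrix.submatrix_apply]
  rw [hsum, ← Matrix.mul_apply, Units.mul_inv, Matrix.one_apply]
  exact if_congr Subtype.ext_iff.symm rfl rfl

theorem IsSkewGroupRingZ.isCrossedProductZ {S : Type} [Ring S] {c : ℤ → AddSubgroup S}
    (h : IsSkewGroupRingZ c) : IsCrossedProductZ c :=
  let ⟨σ, _, hσ⟩ := h
  fun d => ⟨σ d, hσ d⟩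

theorem isSkewGroupRingZ_of_unit {S : Type} [Ring S] {c : ℤ → AddSubgroup S}
    (hmul : ∀ {a b : ℤ} {x y : S}, x ∈ c a → y ∈ c b → x * y ∈ c (a + b)) (hone : 1 ∈ c 0)
    (u : Sˣ) (hu : (u : S) ∈ c 1) (hu_inv : ((u⁻¹ : Sˣ) : S) ∈ c (-1)) :
    IsSkewGroupRingZ c := by
  refine ⟨fun d => u ^ d, zpow_add u, fun d => ?_⟩
  induction d using Int.induction_on with
  | zero => simpa using hone
  | succ k ih => simpa [zpow_add_one] using hmul ih hu
  | pred k ih => simpa [sub_eq_add_neg, zpow_add] using hmul ih hu_inv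

section MonomialMatrix

variable {ι R : Type*} [DecidableEq ι]

def monomialMatrix [Zero R] (π : Equiv.Perm ι) (a : ι → R) : Matrix ι ι R :=
  Matrix.of fun i j => if π i = j then a i else 0

theorem monomialMatrix_mul_monomialMatrix [Fintype ι] [NonUnitalNonAssocSemiring R]
    (π σ : Equiv.Perm ι) (a b : ι → R) :
    monomialMatrix π a * monomialMatrix σ b =
      monomialMatrix (π.trans σ) fun i => a i * b (π i) := by
  ext i k
  simp only [monomialMatrix, Matrix.mul_apply, Matrix.of_apply, ite_mul, zero_mul]
  rw [Finset.sum_ite_eq _ _ _, if_pos (Finset.mem_univ _), mul_ite, mul_zero]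
  rfl

theorem monomialMatrix_refl_one [Zero R] [One R] :
    monomialMatrix (Equiv.refl ι) (fun _ => (1 : R)) = 1 := by
  ext i j
  rw [Matrix.one_apply]
  rfl

def monomialMatrixUnit [Fintype ι] [Semiring R] (π : Equiv.Perm ι) (a : ι → Rˣ) :
    (Matrix ι ι R)ˣ where
  val := monomialMatrix π fun i => a i
  inv := monomialMatrix π.symm fun i => ↑(a (π.symm i))⁻¹
  val_inv := by simp [monomialMatrix_mul_monomialMatrix, monomialMatrix_refl_one]
  inv_val := by simp [monomialMatrix_mul_monomialMatrix, monomialMatrix_refl_one]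

end MonomialMatrix

section MatrixComponent

variable {R : Type} [Ring R] {c : ℤ → AddSubgroup R} {n : ℕ} {γv : Fin n → ℤ}

theorem mul_mem_matrixComponentZ
    (hmul : ∀ {a b : ℤ} {x y : R}, x ∈ c a → y ∈ c b → x * y ∈ c (a + b)) {a b : ℤ}
    {M N : Matrix (Fin n) (Fin n) R} (hM : M ∈ matrixComponentZ c n γv a)
    (hN : N ∈ matrixComponentZ c n γv b) : M * N ∈ matrixComponentZ c n γv (a + b) := by
  intro i j
  rw [Matrix.mul_apply]
  refine AddSubgroup.sum_mem _ fun k _ => ?_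
  have hdeg : -(γv i) + a + γv k + (-(γv k) + b + γv j) = -(γv i) + (a + b) + γv j := by ring
  exact hdeg ▸ hmul (hM i k) (hN k j)

theorem one_mem_matrixComponentZ (hone : 1 ∈ c 0) :
    (1 : Matrix (Fin n) (Fin n) R) ∈ matrixComponentZ c n γv 0 := by
  intro i j
  rcases eq_or_ne i j with rfl | hij
  · simpa using hone
  · simp [Matrix.one_apply_ne hij]

theorem monomialMatrix_mem_matrixComponentZ {d : ℤ} {π : Equiv.Perm (Fin n)} {a : Fin n → R}
    (ha : ∀ i, a i ∈ c (-(γv i) + d + γv (π i))) :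
    monomialMatrix π a ∈ matrixComponentZ c n γv d := by
  intro i j
  by_cases hij : π i = j
  · subst hij
    simpa [monomialMatrix] using ha i
  · simp [monomialMatrix, hij]

end MatrixComponent

theorem exists_perm_apply_eq_of_ncard_fiber_eq {α β : Type*} [Finite α] (f g : α → β)
    (h : ∀ b, {a | f a = b}.ncard = {a | g a = b}.ncard) :
    ∃ π : Equiv.Perm α, ∀ a, g (π a) = f a := by
  have e : ∀ b, {a // f a = b} ≃ {a // g a = b} := fun b =>
    (Finite.card_eq.mp (h b)).some
  exact ⟨Equiv.ofFiberEquiv e, Equiv.ofFiberEquiv_map e⟩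

/-- The unit `x^(m k)` of `K[x^m, x^{-m}]`. -/
def laurentMonomialUnit (K : Type) [Field K] (k : ℤ) : (AddMonoidAlgebra K ℤ)ˣ :=
  Units.map (AddMonoidAlgebra.of K ℤ) (toUnits (Multiplicative.ofAdd k))

section Laurent

variable {K : Type} [Field K] {m n : ℕ}

theorem single_mem_laurentComponent (k : ℤ) (a : K) :
    AddMonoidAlgebra.single k a ∈ laurentComponent K m (m * k) := fun _ hk' =>
  Finsupp.single_eq_of_ne' fun h => hk' (h ▸ rfl)

theorem one_mem_laurentComponent : (1 : AddMonoidAlgebra K ℤ) ∈ laurentComponent K m 0 := by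
  have h := single_mem_laurentComponent (K := K) (m := m) 0 1
  rwa [mul_zero, ← AddMonoidAlgebra.one_def] at h

theorem eq_zero_of_mem_laurentComponent {d : ℤ} {f : AddMonoidAlgebra K ℤ}
    (hf : f ∈ laurentComponent K m d) (hd : ¬(m : ℤ) ∣ d) : f = 0 := by
  ext k
  exact hf k fun h => hd ⟨k, h.symm⟩

theorem ncard_fiber_le_of_unit_mem {γv : Fin n → ℤ} {d : ℤ}
    {u : (Matrix (Fin n) (Fin n) (AddMonoidAlgebra K ℤ))ˣ}
    (hu : (u : Matrix (Fin n) (Fin n) (AddMonoidAlgebra K ℤ)) ∈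
      matrixComponentZ (laurentComponent K m) n γv d) (r : ZMod m) :
    {i | (γv i : ZMod m) = r}.ncard ≤ {i | (γv i : ZMod m) = r - d}.ncard := by
  refine Matrix.ncard_le_ncard_of_isUnit u.isUnit fun i hi j hj => ?_
  refine eq_zero_of_mem_laurentComponent (hu i j) fun hdvd => hj ?_
  have h := (ZMod.intCast_zmod_eq_zero_iff_dvd _ m).mpr hdvd
  rw [Set.mem_ofPred_eq] at hi ⊢
  push_cast at h
  rw [← hi]
  linear_combination h

theorem ncard_fiber_eq_of_isCrossedProductZ {γv : Fin n → ℤ}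
    (h : IsCrossedProductZ (matrixComponentZ (laurentComponent K m) n γv)) (r r' : ZMod m) :
    {i | (γv i : ZMod m) = r}.ncard = {i | (γv i : ZMod m) = r'}.ncard := by
  have hle : ∀ r r' : ZMod m,
      {i | (γv i : ZMod m) = r}.ncard ≤ {i | (γv i : ZMod m) = r'}.ncard := by
    intro r r'
    obtain ⟨d, hd⟩ := ZMod.intCast_surjective (r - r')
    obtain ⟨u, hu⟩ := h d
    have hr := ncard_fiber_le_of_unit_mem hu r
    rwa [hd, sub_sub_cancel] at hr
  exact (hle r r').antisymm (hle r' r)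

theorem isSkewGroupRingZ_of_ncard_fiber_eq {γv : Fin n → ℤ}
    (h : ∀ r r' : ZMod m, {i | (γv i : ZMod m) = r}.ncard = {i | (γv i : ZMod m) = r'}.ncard) :
    IsSkewGroupRingZ (matrixComponentZ (laurentComponent K m) n γv) := by
  obtain ⟨π, hπ⟩ := exists_perm_apply_eq_of_ncard_fiber_eq (fun i => (γv i : ZMod m))
    (fun i => (γv i : ZMod m) + 1) fun r => by
      simpa [← eq_sub_iff_add_eq] using h r (r - 1)
  have hdvd : ∀ i, (m : ℤ) ∣ -(γv i) + 1 + γv (π i) := fun i => by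
    rw [← ZMod.intCast_zmod_eq_zero_iff_dvd]
    push_cast
    linear_combination hπ i
  choose t ht using hdvd
  let u := monomialMatrixUnit π fun i => laurentMonomialUnit K (t i)
  refine isSkewGroupRingZ_of_unit (mul_mem_matrixComponentZ laurentComponent_mul)
    (one_mem_matrixComponentZ one_mem_laurentComponent) u ?_ ?_
  · refine monomialMatrix_mem_matrixComponentZ fun i => ?_
    simpa [laurentMonomialUnit, ht i] using single_mem_laurentComponent (m := m) (t i) (1 : K)
  · refine monomialMatrix_mem_matrixComponentZ fun i => ?_
    have hdeg : -(γv i) + -1 + γv (π.symm i) = m * -t (π.symm i) := by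
      have := ht (π.symm i)
      rw [Equiv.apply_symm_apply] at this
      linear_combination -this
    simpa [laurentMonomialUnit, hdeg] using
      single_mem_laurentComponent (m := m) (-t (π.symm i)) (1 : K)

end Laurent

theorem ncard_emod_pos_and_eq_iff {ι : Type*} [Finite ι] [Nonempty ι] {m : ℕ} (hm : 0 < m)
    (γv : ι → ℤ) :
    ((∀ j : ℕ, j < m → 0 < {i : ι | γv i % (m : ℤ) = (j : ℤ)}.ncard) ∧
        ∀ j j' : ℕ, j < m → j' < m →
          {i : ι | γv i % (m : ℤ) = (j : ℤ)}.ncard = {i : ι | γv i % (m : ℤ) = (j' : ℤ)}.ncard) ↔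
      ∀ r r' : ZMod m, {i | (γv i : ZMod m) = r}.ncard = {i | (γv i : ZMod m) = r'}.ncard := by
  have : NeZero m := ⟨hm.ne'⟩
  have hfiber : ∀ j : ℕ, j < m →
      {i : ι | γv i % (m : ℤ) = (j : ℤ)} = {i | (γv i : ZMod m) = ((j : ℤ) : ZMod m)} := by
    intro j hj
    ext i
    rw [Set.mem_ofPred_eq, Set.mem_ofPred_eq, ZMod.intCast_eq_intCast_iff',
      Int.emod_eq_of_lt (Int.natCast_nonneg j) (by exact_mod_cast hj)]
  constructor
  · rintro ⟨-, heq⟩ r r'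
    have h := heq r.val r'.val r.val_lt r'.val_lt
    rwa [hfiber _ r.val_lt, hfiber _ r'.val_lt, Int.cast_natCast, Int.cast_natCast,
      ZMod.natCast_zmod_val, ZMod.natCast_zmod_val] at h
  · intro heq
    obtain ⟨i₀⟩ := ‹Nonempty ι›
    refine ⟨fun j hj => ?_, fun j j' hj hj' => ?_⟩
    · rw [hfiber j hj, heq _ (γv i₀), Set.ncard_pos (Set.toFinite _)]
      exact ⟨i₀, rfl⟩
    · rw [hfiber j hj, hfiber j' hj']
      exact heq _ _

/-- `Mₙ(K[x^m, x^{-m}])(γ₁, …, γₙ)` is a crossed product iff the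
counts `k_j = #{i | γᵢ ≡ j (mod m)}`, `j = 0, …, m-1`, are all positive and equal to
each other; and in that case it is a skew group ring. -/
theorem laurentMatrix_crossedProduct_iff (K : Type) [Field K] (m n : ℕ) (hm : 0 < m)
    (hn : 0 < n) (γv : Fin n → ℤ) :
    (IsCrossedProductZ (matrixComponentZ (laurentComponent K m) n γv) ↔
      ((∀ j : ℕ, j < m → 0 < {i : Fin n | γv i % (m : ℤ) = (j : ℤ)}.ncard) ∧
        ∀ j j' : ℕ, j < m → j' < m →
          {i : Fin n | γv i % (m : ℤ) = (j : ℤ)}.ncard =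
          {i : Fin n | γv i % (m : ℤ) = (j' : ℤ)}.ncard)) ∧
    (IsCrossedProductZ (matrixComponentZ (laurentComponent K m) n γv) →
      IsSkewGroupRingZ (matrixComponentZ (laurentComponent K m) n γv)) := by
  have : Nonempty (Fin n) := ⟨⟨0, hn⟩⟩
  rw [ncard_emod_pos_and_eq_iff hm γv]
  exact ⟨⟨ncard_fiber_eq_of_isCrossedProductZ,
      fun h => (isSkewGroupRingZ_of_ncard_fiber_eq h).isCrossedProductZ⟩,
    fun h => isSkewGroupRingZ_of_ncard_fiber_eq (ncard_fiber_eq_of_isCrossedProductZ h)⟩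
end
end
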